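/- Let m be a prime with m ≡ 1 (mod 6). Then there exists an integer s with s² ≡ −3 (mod m), and m divides p(n,3) if and only if n is congruent modulo 6m to one of ±0, ±1, ±2, ±(2m−1), ±(2m+2), ±(3m+s(m−1)). -/

import Mathlib

open Finset

/-- The set of partitions of `n` into exactly 3 positive parts, as triples
`(a, b, c)` with `a ≥ b ≥ c ≥ 1` and `a + b + c = n`. -/
def P3 (n : ℕ) : Finset (ℕ × ℕ × ℕ) :=
  (Finset.range (n+1) ×ˢ Finset.range (n+1) ×ˢ Finset.range (n+1)).filter
    (fun t => t.2.1 ≤ t.1 ∧ t.2.2 ≤ t.2.1 ∧ 1 ≤ t.2.2 ∧ t.1 + t.2.1 + t.2.2 = n)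

/-- `p3 n` is the number of partitions of `n` into exactly 3 positive parts. -/
def p3 (n : ℕ) : ℕ := (P3 n).card

/-!
Removing the smallest part gives `p(n + 3, 3) = p(n, 3) + ⌊(n + 2) / 2⌋`, whence
`p(n, 3) = ⌊(n² + 6) / 12⌋` and `12 p(n, 3) = n² - c²` with `c = 0, 1, 2` for `n ≡ 0, ±1, ±2`
(mod 6) and `c² = -3` for `n ≡ 3`. Since a prime `m ≡ 1 (mod 6)` has a cube root of unity `ω ≠ 1`,
`s = 2ω + 1` satisfies `s² ≡ -3 (mod m)`, so `m ∣ p(n, 3)` iff `n ≡ ±c (mod m)` with `c = s` in the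
last case. By the Chinese remainder theorem the listed classes mod `6m` are exactly the pairs
`(n mod 6, ±c mod m)`.
-/

theorem ZMod.exists_sq_eq_neg_three {p : ℕ} [Fact p.Prime] (hp : p % 3 = 1) :
    ∃ s : ZMod p, s ^ 2 = -3 := by
  have : Fact (Nat.Prime 3) := ⟨Nat.prime_three⟩
  obtain ⟨ω, hω⟩ := exists_prime_orderOf_dvd_card (G := (ZMod p)ˣ) 3
    (by rw [ZMod.card_units]; omega)
  have hω3 : (ω : ZMod p) ^ 3 = 1 := by
    rw [← Units.val_pow_eq_pow_val, ← hω, pow_orderOf_eq_one, Units.val_one]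
  have hω1 : (ω : ZMod p) - 1 ≠ 0 := by
    rw [sub_ne_zero, Ne, Units.val_eq_one]
    rintro rfl
    simp at hω
  refine ⟨2 * ω + 1, eq_neg_of_add_eq_zero_left ?_⟩
  have : ((ω : ZMod p) - 1) * ((2 * ω + 1) ^ 2 + 3) = 0 := by linear_combination 4 * hω3
  simpa [hω1] using this

theorem ZMod.eq_iff_castHom_eq_and_castHom_eq {a b : ℕ} (h : a.Coprime b) {x y : ZMod (a * b)} :
    x = y ↔ castHom (dvd_mul_right a b) (ZMod a) x = castHom (dvd_mul_right a b) (ZMod a) y ∧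
      castHom (dvd_mul_left b a) (ZMod b) x = castHom (dvd_mul_left b a) (ZMod b) y := by
  let e : ZMod (a * b) →+* ZMod a × ZMod b := chineseRemainder h
  have h₁ : (RingHom.fst _ _).comp e = castHom (dvd_mul_right a b) (ZMod a) :=
    Subsingleton.elim _ _
  have h₂ : (RingHom.snd _ _).comp e = castHom (dvd_mul_left b a) (ZMod b) :=
    Subsingleton.elim _ _
  rw [← h₁, ← h₂, ← (chineseRemainder h).injective.eq_iff, Prod.ext_iff]
  rfl

theorem mem_P3 {n a b c : ℕ} : (a, b, c) ∈ P3 n ↔ b ≤ a ∧ c ≤ b ∧ 1 ≤ c ∧ a + b + c = n := by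
  simp only [P3, mem_filter, mem_product, mem_range]
  omega

theorem card_filter_P3_smallest_eq_one (n : ℕ) :
    #{t ∈ P3 (n + 3) | t.2.2 = 1} = (n + 2) / 2 := by
  rw [show (n + 2) / 2 = #(Icc 1 ((n + 2) / 2)) by simp]
  apply card_nbij' (fun t => t.2.1) (fun b => (n + 2 - b, b, 1))
  · rintro ⟨a, b, c⟩
    simp only [coe_filter, Set.mem_ofPred_eq, mem_P3, coe_Icc, Set.mem_Icc]
    omega
  · intro b
    simp only [coe_filter, Set.mem_ofPred_eq, mem_P3, coe_Icc, Set.mem_Icc, and_true]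
    omega
  · rintro ⟨a, b, c⟩
    simp only [coe_filter, Set.mem_ofPred_eq, mem_P3, Prod.mk.injEq, true_and]
    omega
  · intro b _
    rfl

theorem card_filter_P3_smallest_ne_one (n : ℕ) :
    #{t ∈ P3 (n + 3) | t.2.2 ≠ 1} = p3 n := by
  apply card_nbij' (fun t => (t.1 - 1, t.2.1 - 1, t.2.2 - 1))
    (fun t => (t.1 + 1, t.2.1 + 1, t.2.2 + 1))
  all_goals
    rintro ⟨a, b, c⟩
    simp only [coe_filter, Set.mem_ofPred_eq, mem_coe, mem_P3, Prod.mk.injEq]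
    omega

theorem p3_add_three (n : ℕ) : p3 (n + 3) = p3 n + (n + 2) / 2 := by
  rw [p3, ← card_filter_add_card_filter_not (fun t => t.2.2 = 1),
    card_filter_P3_smallest_eq_one, card_filter_P3_smallest_ne_one, add_comm]

theorem p3_eq (n : ℕ) : p3 n = (n ^ 2 + 6) / 12 := by
  induction n using Nat.strong_induction_on with
  | _ n ih =>
    match n with
    | 0 | 1 | 2 => decide
    | k + 3 =>
      rw [p3_add_three, ih k (by omega)]
      obtain ⟨q, r, hr, rfl⟩ : ∃ q r, r < 12 ∧ k = 12 * q + r :=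
        ⟨k / 12, k % 12, by omega, by omega⟩
      have hsq₃ : (12 * q + r + 3) ^ 2 + 6 =
          12 * (12 * q ^ 2 + 2 * q * r + 6 * q) + ((r + 3) ^ 2 + 6) := by ring
      have hsq : (12 * q + r) ^ 2 + 6 = 12 * (12 * q ^ 2 + 2 * q * r) + (r ^ 2 + 6) := by ring
      interval_cases r <;> omega

/-- `c` with `12 p(n, 3) = n² - c²`, as a function of `n mod 6`, where `s² = -3`. -/
def p3Root {R : Type*} [Ring R] (s : R) : ZMod 6 → R := ![0, 1, 2, s, 2, 1]

theorem twelve_mul_p3 {R : Type*} [CommRing R] {s : R} (hs : s ^ 2 = -3) (n : ℕ) :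
    12 * (p3 n : R) = n ^ 2 - p3Root s n ^ 2 := by
  obtain ⟨q, r, hr, rfl⟩ : ∃ q r, r < 6 ∧ n = 6 * q + r := ⟨n / 6, n % 6, by omega, by omega⟩
  have hdiv : ((6 * q + r) ^ 2 + 6) / 12 = 3 * q ^ 2 + q * r + (r ^ 2 + 6) / 12 := by
    rw [show (6 * q + r) ^ 2 + 6 = (r ^ 2 + 6) + 12 * (3 * q ^ 2 + q * r) by ring,
      Nat.add_mul_div_left _ _ (by norm_num), add_comm]
  have hcast : ((6 * q + r : ℕ) : ZMod 6) = r := by simp [show (6 : ZMod 6) = 0 from rfl]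
  rw [p3_eq, hdiv, hcast]
  interval_cases r <;>
    simp only [p3Root, Matrix.cons_val, hs, Nat.cast_add, Nat.cast_mul, Nat.cast_pow,
      Nat.cast_ofNat, Nat.cast_one, Nat.cast_zero] <;>
    ring

theorem prime_dvd_p3_iff {p : ℕ} [Fact p.Prime] (hp : ¬ p ∣ 12) {s : ZMod p} (hs : s ^ 2 = -3)
    (n : ℕ) : p ∣ p3 n ↔ (n : ZMod p) = p3Root s n ∨ (n : ZMod p) = -p3Root s n := by
  have h12 : (12 : ZMod p) ≠ 0 := by exact_mod_cast (ZMod.natCast_eq_zero_iff 12 p).not.mpr hp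
  rw [← sq_eq_sq_iff_eq_or_eq_neg, ← sub_eq_zero, ← twelve_mul_p3 hs, mul_eq_zero,
    or_iff_right h12, ZMod.natCast_eq_zero_iff]

theorem exists_pm_residue_iff {m : ℕ} (hm : m % 6 = 1) (s : ℤ) (n : ℕ) :
    (∃ x : ZMod (6 * m), (x = 0 ∨ x = 1 ∨ x = 2 ∨ x = 2 * (m : ZMod (6 * m)) - 1 ∨
        x = 2 * (m : ZMod (6 * m)) + 2 ∨
        x = 3 * (m : ZMod (6 * m)) + (s : ZMod (6 * m)) * ((m : ZMod (6 * m)) - 1)) ∧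
      ((n : ZMod (6 * m)) = x ∨ (n : ZMod (6 * m)) = -x)) ↔
    (n : ZMod m) = p3Root (s : ZMod m) n ∨ (n : ZMod m) = -p3Root (s : ZMod m) n := by
  have hcop : Nat.Coprime 6 m := by rw [Nat.Coprime, Nat.gcd_rec, hm]; rfl
  have hm6 : (m : ZMod 6) = 1 := by rw [← ZMod.natCast_mod, hm, Nat.cast_one]
  simp only [or_and_right, exists_or, exists_eq_left]
  simp only [ZMod.eq_iff_castHom_eq_and_castHom_eq hcop, map_natCast, map_sub, map_mul, map_add,
    map_neg, map_ofNat, map_intCast, map_zero, map_one, hm6, ZMod.natCast_self]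
  obtain ⟨r, hr, hnr⟩ : ∃ r : ℕ, r < 6 ∧ (n : ZMod 6) = r :=
    ⟨n % 6, Nat.mod_lt _ (by norm_num), (ZMod.natCast_mod n 6).symm⟩
  rw [hnr]
  interval_cases r <;> simp +decide [p3Root, or_comm]

theorem stmt7 (m : ℕ) (hm : m.Prime) (h : m % 6 = 1) :
    ∃ s : ℤ, (m : ℤ) ∣ s ^ 2 + 3 ∧
      ∀ n : ℕ, (m ∣ p3 n ↔
        ∃ x : ZMod (6 * m),
          (x = 0 ∨ x = 1 ∨ x = 2 ∨
            x = 2 * (m : ZMod (6 * m)) - 1 ∨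
            x = 2 * (m : ZMod (6 * m)) + 2 ∨
            x = 3 * (m : ZMod (6 * m)) + (s : ZMod (6 * m)) * ((m : ZMod (6 * m)) - 1)) ∧
          ((n : ZMod (6 * m)) = x ∨ (n : ZMod (6 * m)) = -x)) := by
  have : Fact m.Prime := ⟨hm⟩
  have h12 : ¬ m ∣ 12 := fun hd => by
    have := Nat.le_of_dvd (by norm_num) hd
    have := hm.two_le
    interval_cases m <;> omega
  obtain ⟨s, hs⟩ := ZMod.exists_sq_eq_neg_three (p := m) (by omega)
  have hs' : ((s.valMinAbs : ℤ) : ZMod m) ^ 2 = -3 := by rw [ZMod.coe_valMinAbs, hs]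
  refine ⟨s.valMinAbs, ?_, fun n => ?_⟩
  · rw [← ZMod.intCast_zmod_eq_zero_iff_dvd]
    simp [hs]
  · rw [prime_dvd_p3_iff h12 hs', exists_pm_residue_iff h]
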